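/- With T(z) the rooted hypertree series satisfying T(z) = z·exp(T(z)^{b-1}/(b-1)!), for every k ≥ 0 and n = s(b-1)+k+1 one has n!·[z^n] (T(z)^{k+1}/(k+1)!) = C(n, k+1)·(k+1)·((n-k-1)!/(((b-1)!)^s s!))·n^{s-1}. -/

import Mathlib

open PowerSeries

/-- Formal composition `f ∘ u` of power series, valid when `u` has zero
constant term. -/
noncomputable def pscomp (f u : PowerSeries ℚ) : PowerSeries ℚ :=
  PowerSeries.mk fun m => ∑ k ∈ Finset.range (m + 1),
    PowerSeries.coeff k f * PowerSeries.coeff m (u ^ k)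

/-!
With `q = b - 1` the functional equation gives `T^j = X^j · exp(j T^q / q!)`, hence
`[z^(q s + j)] T^j = ∑_r (j/q!)^r / r! · [z^(q s)] T^(q r)`. By strong induction on `s` the inner
coefficients have the Lagrange form `[z^(q s + j)] T^j = j (q s + j)^(s-1) / (q!^s s!)`, and then the
sum collapses by the binomial theorem: `∑_t C(s-1, t) j^(t+1) (q s)^(s-1-t) = j (j + q s)^(s-1)`.
-/

open Finset
open scoped Nat

theorem PowerSeries.coeff_pow_eq_zero_of_lt {R : Type*} [CommSemiring R] {u : R⟦X⟧}
    (hu : constantCoeff u = 0) {m i : ℕ} (h : m < i) : coeff m (u ^ i) = 0 :=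
  coeff_of_lt_order m <| (Nat.cast_lt.mpr h).trans_le (le_order_pow_of_constantCoeff_eq_zero i hu)

theorem pscomp_eq_subst (f : ℚ⟦X⟧) {u : ℚ⟦X⟧} (hu : constantCoeff u = 0) :
    pscomp f u = subst u f := by
  ext m
  rw [pscomp, coeff_mk, coeff_subst' (HasSubst.of_constantCoeff_zero' hu),
    finsum_eq_sum_of_support_subset _ (s := range (m + 1))]
  · rfl
  · intro d hd
    by_contra h
    exact hd (by
      simp only [coeff_pow_eq_zero_of_lt hu (by simpa [Nat.lt_succ_iff] using h), smul_zero])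

theorem PowerSeries.subst_exp_pow {A : Type*} [CommRing A] [Algebra ℚ A] {u : A⟦X⟧}
    (hu : HasSubst u) (j : ℕ) : subst u (exp A) ^ j = subst ((j : A) • u) (exp A) := by
  rw [← subst_pow hu, exp_pow_eq_rescale_exp, rescale_eq_subst,
    subst_comp_subst_apply (HasSubst.smul_X' _) hu, subst_smul hu, subst_X hu]

theorem lagrange_summand_eq (q j s t : ℕ) (hq : 1 ≤ q) (hts : t ≤ s) :
    ((j : ℚ) / q !) ^ (t + 1) / (t + 1)! *
      ((q * (t + 1) : ℚ) / (q * (s + 1)) * (q * (s + 1) : ℚ) ^ (s - t) /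
        ((q ! : ℚ) ^ (s - t) * (s - t)!)) =
    j * (j ^ t * (q * (s + 1) : ℚ) ^ (s - t) * s.choose t) / ((q ! : ℚ) ^ (s + 1) * (s + 1)!) := by
  have hpow : (q ! : ℚ) ^ (s + 1) = (q ! : ℚ) ^ (t + 1) * (q ! : ℚ) ^ (s - t) := by
    rw [← pow_add]; congr 1; omega
  rw [Nat.cast_choose ℚ hts, hpow, Nat.factorial_succ, Nat.factorial_succ, div_pow]
  push_cast
  field_simp
  ring

section FunctionalEquation

variable {q : ℕ} {T : ℚ⟦X⟧}

theorem constantCoeff_eq_zero_of_eq_X_mul_pscomp {f u : ℚ⟦X⟧} (hT : T = X * pscomp f u) :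
    constantCoeff T = 0 := by
  rw [hT, map_mul, constantCoeff_X, zero_mul]

theorem coeff_pow_eq_sum_of_eq_X_mul_exp (hq : 1 ≤ q)
    (hT : T = X * pscomp (exp ℚ) (C (q ! : ℚ)⁻¹ * T ^ q)) (j m : ℕ) :
    coeff (m + j) (T ^ j) =
      ∑ r ∈ range (m + 1), ((j : ℚ) / q !) ^ r / r ! * coeff m (T ^ (q * r)) := by
  set u := C (q ! : ℚ)⁻¹ * T ^ q
  have hu : constantCoeff u = 0 := by
    simp [u, constantCoeff_eq_zero_of_eq_X_mul_pscomp hT, zero_pow (by omega : q ≠ 0)]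
  have hju : constantCoeff ((j : ℚ) • u) = 0 := by simp [hu]
  conv_lhs => rw [hT]
  rw [mul_pow, pscomp_eq_subst _ hu, subst_exp_pow (HasSubst.of_constantCoeff_zero' hu),
    ← pscomp_eq_subst _ hju, mul_comm, coeff_mul_X_pow, pscomp, coeff_mk]
  refine sum_congr rfl fun r _ => ?_
  rw [coeff_exp, smul_pow, coeff_smul, mul_pow, ← map_pow, coeff_C_mul, ← pow_mul]
  simp only [smul_eq_mul, Algebra.algebraMap_self, RingHom.id_apply, div_pow, inv_pow]
  ring

-- Stated as `j / (q s + j) * (q s + j) ^ s` so that `s = 0` needs no negative exponent.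
theorem coeff_pow_of_eq_X_mul_exp (hq : 1 ≤ q)
    (hT : T = X * pscomp (exp ℚ) (C (q ! : ℚ)⁻¹ * T ^ q)) (s : ℕ) {j : ℕ} (hj : 1 ≤ j) :
    coeff (q * s + j) (T ^ j) =
      j / (q * s + j : ℚ) * (q * s + j : ℚ) ^ s / ((q ! : ℚ) ^ s * s !) := by
  induction s using Nat.strong_induction_on generalizing j with
  | _ s ih =>
  have hT0 := constantCoeff_eq_zero_of_eq_X_mul_pscomp hT
  rw [coeff_pow_eq_sum_of_eq_X_mul_exp hq hT, ← sum_subset (range_subset_range.mpr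
    (by nlinarith : s + 1 ≤ q * s + 1)) fun r _ hr => by
      rw [coeff_pow_eq_zero_of_lt hT0 (by rw [mem_range, not_lt] at hr; nlinarith), mul_zero]]
  cases s with
  | zero =>
    have : (j : ℚ) ≠ 0 := by positivity
    simp [this]
  | succ s =>
    have hterm : ∀ t ∈ range (s + 1), ((j : ℚ) / q !) ^ (t + 1) / (t + 1)! *
        coeff (q * (s + 1)) (T ^ (q * (t + 1))) =
        j * (j ^ t * (q * (s + 1) : ℚ) ^ (s - t) * s.choose t) /
          ((q ! : ℚ) ^ (s + 1) * (s + 1)!) := by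
      intro t ht
      have hts : t ≤ s := Nat.lt_succ_iff.mp (mem_range.mp ht)
      rw [show q * (s + 1) = q * (s - t) + q * (t + 1) by rw [← mul_add]; congr 1; omega,
        ih (s - t) (by omega) (by nlinarith), ← lagrange_summand_eq q j s t hq hts]
      have hY : (q * (s - t : ℕ) + (q * (t + 1) : ℕ) : ℚ) = q * (s + 1) := by
        push_cast [Nat.cast_sub hts]; ring
      rw [hY, Nat.cast_mul, Nat.cast_succ]
    rw [sum_range_succ', sum_congr rfl hterm, ← sum_div, ← mul_sum, ← add_pow]
    have hconst : coeff (q * (s + 1)) (T ^ (q * 0)) = 0 := by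
      rw [mul_zero, pow_zero, coeff_one, if_neg (by positivity)]
    have hm : (q * (s + 1 : ℕ) + j : ℚ) ≠ 0 := by positivity
    rw [hconst, mul_zero, add_zero, pow_succ]
    push_cast at hm ⊢
    field_simp
    ring

end FunctionalEquation

/-- If `T = z·exp(T^{b-1}/(b-1)!)` then for all `k ≥ 0` and `n = s(b-1)+k+1`,
`n!·[z^n](T^{k+1}/(k+1)!) = C(n,k+1)·(k+1)·((n-k-1)!/((b-1)!^s·s!))·n^{s-1}`. -/
theorem forest_egf_coeff (b : ℕ) (hb : 2 ≤ b) (T : PowerSeries ℚ)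
    (hT : T = PowerSeries.X *
      pscomp (PowerSeries.exp ℚ)
        (PowerSeries.C ((Nat.factorial (b - 1) : ℚ))⁻¹ * T ^ (b - 1)))
    (k s n : ℕ) (hn : n = s * (b - 1) + k + 1) :
    (Nat.factorial n : ℚ) *
        PowerSeries.coeff n
          (T ^ (k + 1) * PowerSeries.C ((Nat.factorial (k + 1) : ℚ))⁻¹)
      = (n.choose (k + 1) : ℚ) * (k + 1) * (Nat.factorial (n - k - 1) : ℚ) /
          ((Nat.factorial (b - 1) : ℚ) ^ s * (Nat.factorial s : ℚ)) *
          (n : ℚ) ^ ((s : ℤ) - 1) := by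
  obtain rfl : n = (b - 1) * s + (k + 1) := by rw [hn]; ring
  have hchoose := Nat.choose_mul_factorial_mul_factorial (Nat.le_add_left (k + 1) ((b - 1) * s))
  have hn0 : (((b - 1) * s + (k + 1) : ℕ) : ℚ) ≠ 0 := by positivity
  rw [coeff_mul_C, coeff_pow_of_eq_X_mul_exp (by omega) hT s (Nat.succ_pos k), Nat.sub_sub,
    zpow_sub_one₀ hn0, zpow_natCast, ← hchoose]
  push_cast at hn0 ⊢
  field_simp
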